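/- arXiv:2601.06930 — 7 statements merged into one kernel-verified Lean document; each statement's English description precedes it below -/
import Mathlib

section
/- Let T be a Littlewood–Richardson tableau of skew shape λ/μ and even weight ν. If some entry of T equals 2i+1 for i ≥ 0 (say T(k,j) = 2i+1), then there exist k' > k and some column j' such that T(k',j') = 2(i+1). -/
/-!
Let `P` be the prefix of the reverse reading word ending at the cell `(k, j)` holding `2i+1`.
Removing that cell leaves a prefix in which, by the Yamanouchi condition, `2i+2` occurs at
most as often as `2i+1`; so `P` contains strictly fewer `2i+2`'s than `2i+1`'s. Since `ν` is
even, `T` contains as many `2i+2`'s as `2i+1`'s, hence some `2i+2` lies outside `P`, i.e. in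
row `k` left of column `j` or in a lower row. Rows weakly increase, so it cannot be in row `k`.
-/

/-- A partition: weakly decreasing, eventually-zero sequence of naturals.
`part k` is the `k`-th part (1-indexed; `part 0` is a dummy value ≥ `part 1`). -/
structure YPart where
  part : ℕ → ℕ
  antitone : ∀ i j : ℕ, i ≤ j → part j ≤ part i
  evZero : ∃ N, ∀ k, N ≤ k → part k = 0

/-- The number of nonzero parts (length) of a partition. -/
noncomputable def YPart.len (p : YPart) : ℕ := sSup {k | 1 ≤ k ∧ p.part k ≠ 0}

/-- Containment of partitions (Young diagrams). -/
def YPart.Sub (m l : YPart) : Prop := ∀ k, m.part k ≤ l.part k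

/-- A partition is even if `ν_{2i-1} = ν_{2i}` for all `i ≥ 1`. -/
def YPart.IsEven (p : YPart) : Prop := ∀ i : ℕ, p.part (2*i+1) = p.part (2*i+2)

/-- The empty partition. -/
def YPart.zero : YPart := ⟨fun _ => 0, fun _ _ _ => Nat.le_refl 0, ⟨0, fun _ _ => rfl⟩⟩

/-- Cell `(k,j)` (1-indexed, matrix style) lies in the skew shape `λ/μ`. -/
def InShape (l m : YPart) (k j : ℕ) : Prop :=
  1 ≤ k ∧ m.part k < j ∧ j ≤ l.part k

/-- A semistandard skew tableau of shape `λ/μ` with entries in `[N] = {1,…,N}`;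
entries outside the skew shape (including the cells of `μ`) are normalized to `0`. -/
structure IsSSYT (l m : YPart) (N : ℕ) (T : ℕ → ℕ → ℕ) : Prop where
  pos : ∀ k j, InShape l m k j → 1 ≤ T k j ∧ T k j ≤ N
  rowLe : ∀ k j, InShape l m k j → InShape l m k (j+1) → T k j ≤ T k (j+1)
  colLt : ∀ k j, InShape l m k j → InShape l m (k+1) j → T k j < T (k+1) j
  outside : ∀ k j, ¬ InShape l m k j → T k j = 0

/-- The number of cells of `λ/μ` with entry `i` whose position satisfies `P`. -/
noncomputable def cnt (l m : YPart) (T : ℕ → ℕ → ℕ) (P : ℕ → ℕ → Prop) (i : ℕ) : ℕ :=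
  {c : ℕ × ℕ | InShape l m c.1 c.2 ∧ T c.1 c.2 = i ∧ P c.1 c.2}.ncard

/-- A Littlewood–Richardson tableau of shape `λ/μ` and weight `ν` on `[N]`:
a semistandard skew tableau whose reverse row reading word (rows right to left,
top to bottom) is Yamanouchi of weight `ν`.  The Yamanouchi condition is stated
on all prefixes of the reverse row word: a prefix ends at a cell `(k,j)` and
consists of all cells in earlier rows together with the cells `(k,b)`, `b ≥ j`. -/
structure IsLR (l m nu : YPart) (N : ℕ) (T : ℕ → ℕ → ℕ) : Prop where
  ssyt : IsSSYT l m N T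
  weight : ∀ i, 1 ≤ i → cnt l m T (fun _ _ => True) i = nu.part i
  yam : ∀ k j i, 1 ≤ i →
    cnt l m T (fun a b => a < k ∨ (a = k ∧ j ≤ b)) (i+1) ≤
    cnt l m T (fun a b => a < k ∨ (a = k ∧ j ≤ b)) i

/-- The Sundaram property: every odd entry `2i+1` lies in row `n+i` or above. -/
def Sundaram (n : ℕ) (l m : YPart) (T : ℕ → ℕ → ℕ) : Prop :=
  ∀ k j i, InShape l m k j → T k j = 2*i + 1 → k ≤ n + i

/-- A Sundaram violation occurs in row `k`: some odd entry `2i+1` appears in row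
`k` with `k > n+i`. -/
def SundViolRow (n : ℕ) (l m : YPart) (T : ℕ → ℕ → ℕ) (k : ℕ) : Prop :=
  ∃ j i, InShape l m k j ∧ T k j = 2*i + 1 ∧ n + i < k

/-- The symplectic (King/Kwon) condition on a straight-shape tableau `G` of shape `g`:
`G(k,1) ≥ 2k−1` for every row `k` of `g`. -/
def IsSymplectic (g : YPart) (G : ℕ → ℕ → ℕ) : Prop :=
  ∀ k, 1 ≤ k → k ≤ g.len → 2*k - 1 ≤ G k 1

/-- Row `i` of the partition `μ^{(mm)}` in the left-companion chain of `T`: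
with `mm = 2n - r + 1`, the partition `μ^{(mm)}` is the shape occupied by the
entries `< r` (including the `0`-entries on the cells of `μ`) in rows
`r, r+1, …, 2n` of `T`; its `i`-th row comes from row `2n - mm + i` of `T`. -/
noncomputable def compShape (l : YPart) (T : ℕ → ℕ → ℕ) (n mm i : ℕ) : ℕ :=
  {j : ℕ | 1 ≤ j ∧ j ≤ l.part (2*n - mm + i) ∧ T (2*n - mm + i) j < 2*n - mm + 1}.ncard

/-- The length (number of nonzero rows) of a shape given by its row-length function. -/
noncomputable def shapeLen (f : ℕ → ℕ) : ℕ := sSup {i | 1 ≤ i ∧ f i ≠ 0}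

/-- The entry of the left companion tableau `G_μ(T)` in cell `(k,j)`:
the least `mm` such that `(k,j)` is a cell of `μ^{(mm)}`. -/
noncomputable def leftCompanion (l : YPart) (T : ℕ → ℕ → ℕ) (n k j : ℕ) : ℕ :=
  sInf {mm | j ≤ compShape l T n mm k}

def readingPrefix (k j : ℕ) (a b : ℕ) : Prop := a < k ∨ (a = k ∧ j ≤ b)

theorem finite_setOf_inShape (l m : YPart) : {c : ℕ × ℕ | InShape l m c.1 c.2}.Finite := by
  obtain ⟨N, hN⟩ := l.evZero
  refine ((Set.finite_Iio N).prod (Set.finite_Iic (l.part 0))).subset ?_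
  rintro ⟨a, b⟩ ⟨-, hmb : m.part a < b, hbl : b ≤ l.part a⟩
  refine ⟨Set.mem_Iio.mpr (not_le.mp fun hNa => ?_), hbl.trans (l.antitone 0 a a.zero_le)⟩
  have := hN a hNa
  omega

theorem cnt_mono {l m : YPart} {T : ℕ → ℕ → ℕ} {P Q : ℕ → ℕ → Prop}
    (hPQ : ∀ a b, P a b → Q a b) (v : ℕ) : cnt l m T P v ≤ cnt l m T Q v :=
  Set.ncard_le_ncard (fun _ ⟨hc, hv, hP⟩ => ⟨hc, hv, hPQ _ _ hP⟩)
    ((finite_setOf_inShape l m).subset fun _ hc => hc.1)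

theorem exists_not_of_cnt_lt_cnt_true {l m : YPart} {T : ℕ → ℕ → ℕ} {P : ℕ → ℕ → Prop}
    {v : ℕ} (h : cnt l m T P v < cnt l m T (fun _ _ => True) v) :
    ∃ a b, InShape l m a b ∧ T a b = v ∧ ¬ P a b := by
  by_contra! hP
  refine h.ne (congrArg Set.ncard ?_)
  ext c
  exact ⟨fun ⟨hc, hv, _⟩ => ⟨hc, hv, trivial⟩, fun ⟨hc, hv, _⟩ => ⟨hc, hv, hP _ _ hc hv⟩⟩

theorem cnt_readingPrefix_eq {l m : YPart} {T : ℕ → ℕ → ℕ} {k j : ℕ} (hcell : InShape l m k j)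
    (v : ℕ) :
    cnt l m T (readingPrefix k j) v =
      cnt l m T (readingPrefix k (j + 1)) v + if T k j = v then 1 else 0 := by
  unfold cnt
  split_ifs with hv
  · have hfin := (finite_setOf_inShape l m).subset
      (fun c (hc : InShape l m c.1 c.2 ∧ T c.1 c.2 = v ∧ readingPrefix k (j + 1) c.1 c.2) => hc.1)
    have hnot : (k, j) ∉
        {c : ℕ × ℕ | InShape l m c.1 c.2 ∧ T c.1 c.2 = v ∧ readingPrefix k (j + 1) c.1 c.2} := by
      rintro ⟨-, -, h | ⟨-, h⟩⟩ <;> omega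
    rw [← Set.ncard_insert_of_notMem hnot hfin]
    congr 1
    ext ⟨a, b⟩
    simp only [Set.mem_ofPred_eq, Set.mem_insert_iff, Prod.mk.injEq, readingPrefix]
    grind
  · rw [add_zero]
    congr 1
    ext ⟨a, b⟩
    simp only [Set.mem_ofPred_eq, readingPrefix]
    grind

theorem IsSSYT.le_of_le {l m : YPart} {N : ℕ} {T : ℕ → ℕ → ℕ} (hT : IsSSYT l m N T)
    {k b j : ℕ} (hb : InShape l m k b) (hj : InShape l m k j) (hbj : b ≤ j) :
    T k b ≤ T k j := by
  induction j, hbj using Nat.le_induction with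
  | base => exact le_rfl
  | succ j hbj ih =>
    have hj' : InShape l m k j := ⟨hj.1, by have := hb.2.1; omega, by have := hj.2.2; omega⟩
    exact (ih hj').trans (hT.rowLe k j hj' hj)

theorem IsLR.cnt_readingPrefix_succ_lt {l m nu : YPart} {N : ℕ} {T : ℕ → ℕ → ℕ}
    (hT : IsLR l m nu N T) {k j : ℕ} (hcell : InShape l m k j) :
    cnt l m T (readingPrefix k j) (T k j + 1) < cnt l m T (readingPrefix k j) (T k j) := by
  have hyam : cnt l m T (readingPrefix k (j + 1)) (T k j + 1) ≤
      cnt l m T (readingPrefix k (j + 1)) (T k j) :=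
    hT.yam k (j + 1) (T k j) (hT.ssyt.pos k j hcell).1
  rw [cnt_readingPrefix_eq hcell, cnt_readingPrefix_eq hcell]
  simp only [left_eq_add, one_ne_zero, if_false, if_true]
  omega

theorem stmt2_general (n : ℕ) (lam mu nu : YPart)
    (hnu : nu.IsEven) (T : ℕ → ℕ → ℕ) (hT : IsLR lam mu nu (2*n) T)
    (k j i : ℕ) (hcell : InShape lam mu k j) (hval : T k j = 2*i + 1) :
    ∃ k' j', k < k' ∧ InShape lam mu k' j' ∧ T k' j' = 2*(i+1) := by
  have hlt : cnt lam mu T (readingPrefix k j) (2*i+1+1) <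
      cnt lam mu T (fun _ _ => True) (2*i+1+1) :=
    calc cnt lam mu T (readingPrefix k j) (2*i+1+1)
        < cnt lam mu T (readingPrefix k j) (2*i+1) := hval ▸ hT.cnt_readingPrefix_succ_lt hcell
      _ ≤ cnt lam mu T (fun _ _ => True) (2*i+1) := cnt_mono (fun _ _ _ => trivial) _
      _ = nu.part (2*i+1) := hT.weight _ (by omega)
      _ = nu.part (2*i+2) := hnu i
      _ = cnt lam mu T (fun _ _ => True) (2*i+1+1) := (hT.weight _ (by omega)).symm
  obtain ⟨a, b, hab, hv, hnot⟩ := exists_not_of_cnt_lt_cnt_true hlt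
  simp only [readingPrefix, not_or, not_and, not_lt, not_le] at hnot
  obtain ⟨hka, hkb⟩ := hnot
  rcases hka.eq_or_lt with rfl | hka
  · have := hT.ssyt.le_of_le hab hcell (hkb rfl).le
    omega
  · exact ⟨a, b, hka, hab, by omega⟩

/-- In an LR tableau of even weight, every odd entry `2i+1` has an
entry `2(i+1)` strictly below it. -/
theorem stmt2 (n : ℕ) (lam mu nu : YPart) (hl : lam.len ≤ 2*n) (hsub : mu.Sub lam)
    (hnu : nu.IsEven) (T : ℕ → ℕ → ℕ) (hT : IsLR lam mu nu (2*n) T)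
    (k j i : ℕ) (hcell : InShape lam mu k j) (hval : T k j = 2*i + 1) :
    ∃ k' j', k < k' ∧ InShape lam mu k' j' ∧ T k' j' = 2*(i+1) :=
  stmt2_general n lam mu nu hnu T hT k j i hcell hval
end

section
/- Let T be a Littlewood–Richardson tableau of skew shape λ/μ and even weight ν. If the first-column entry in row k satisfies T(k,1) = 2i+1 for some i ≥ 0, then T(k+1,1) = 2(i+1). -/
/-!
Evenness of `ν` gives as many entries `2i+2` as `2i+1`. In the Yamanouchi prefix that stops just
after `(k,1)` there are at most as many `2i+2` as `2i+1`, and strictly fewer `2i+1` than in total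
because `(k,1)` itself is missing; so some `2i+2` lies strictly below row `k`. Row `k+1` is then
nonempty in column `1`, and column strictness squeezes `T(k+1,1)` between `2i+1` and `2i+2`.
-/

theorem InShape.of_between {l m : YPart} {a b a' j j' j'' : ℕ} (h : InShape l m a j)
    (h' : InShape l m b j') (ha : a ≤ a') (hb : a' ≤ b) (hj : j ≤ j'') (hj' : j'' ≤ j') :
    InShape l m a' j'' :=
  ⟨h.1.trans ha, (m.antitone a a' ha).trans_lt (h.2.1.trans_le hj),
    hj'.trans (h'.2.2.trans (l.antitone a' b hb))⟩

section Counting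

variable {l m : YPart} {T : ℕ → ℕ → ℕ} {P Q : ℕ → ℕ → Prop} {i : ℕ}

theorem cnt_le_cnt (hPQ : ∀ a b, InShape l m a b → T a b = i → P a b → Q a b) :
    cnt l m T P i ≤ cnt l m T Q i :=
  Set.ncard_le_ncard (fun _ ⟨hc, hi, hP⟩ => ⟨hc, hi, hPQ _ _ hc hi hP⟩)
    ((finite_setOf_inShape l m).subset fun _ hc => hc.1)

theorem cnt_lt_cnt (hPQ : ∀ a b, InShape l m a b → T a b = i → P a b → Q a b) {a b : ℕ}
    (hab : InShape l m a b) (hi : T a b = i) (hQ : Q a b) (hP : ¬ P a b) :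
    cnt l m T P i < cnt l m T Q i :=
  Set.ncard_lt_ncard
    ⟨fun _ ⟨hc, hi, hP⟩ => ⟨hc, hi, hPQ _ _ hc hi hP⟩,
      fun h => hP (h (show (a, b) ∈ _ from ⟨hab, hi, hQ⟩)).2.2⟩
    ((finite_setOf_inShape l m).subset fun _ hc => hc.1)

end Counting

namespace IsSSYT

variable {l m : YPart} {N : ℕ} {T : ℕ → ℕ → ℕ}

theorem le_of_row (hT : IsSSYT l m N T) {k j j' : ℕ} (h : InShape l m k j)
    (h' : InShape l m k j') (hjj' : j ≤ j') : T k j ≤ T k j' := by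
  induction j', hjj' using Nat.le_induction with
  | base => rfl
  | succ j' hjj' ih =>
    have hj' : InShape l m k j' := h.of_between h' le_rfl le_rfl hjj' j'.le_succ
    exact (ih hj').trans (hT.rowLe k j' hj' h')

theorem le_of_col (hT : IsSSYT l m N T) {a b j : ℕ} (h : InShape l m a j)
    (h' : InShape l m b j) (hab : a ≤ b) : T a j ≤ T b j := by
  induction b, hab using Nat.le_induction with
  | base => rfl
  | succ b hab ih =>
    have hb : InShape l m b j := h.of_between h' hab b.le_succ le_rfl le_rfl
    exact (ih hb).trans (hT.colLt b j hb h').le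

end IsSSYT

theorem IsLR.exists_succ_after {l m nu : YPart} {N : ℕ} {T : ℕ → ℕ → ℕ}
    (hT : IsLR l m nu N T) {k j : ℕ} (hkj : InShape l m k j)
    (hnu : nu.part (T k j + 1) = nu.part (T k j)) :
    ∃ a b, InShape l m a b ∧ T a b = T k j + 1 ∧ (k < a ∨ (a = k ∧ b ≤ j)) := by
  set v := T k j
  set pre : ℕ → ℕ → Prop := fun a b => a < k ∨ (a = k ∧ j + 1 ≤ b)
  have hv : 1 ≤ v := (hT.ssyt.pos k j hkj).1
  by_contra! hafter
  have hall : cnt l m T (fun _ _ => True) (v + 1) ≤ cnt l m T pre (v + 1) :=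
    cnt_le_cnt fun a b hab hval _ => by
      have := hafter a b hab hval
      simp only [pre]
      omega
  have hyam : cnt l m T pre (v + 1) ≤ cnt l m T pre v := hT.yam k (j + 1) v hv
  have hmiss : cnt l m T pre v < cnt l m T (fun _ _ => True) v :=
    cnt_lt_cnt (fun _ _ _ _ _ => trivial) hkj rfl trivial (by simp [pre])
  have hwv := hT.weight v hv
  have hwv' := hT.weight (v + 1) (by omega)
  omega

theorem stmt3_general (n : ℕ) (lam mu nu : YPart)
    (hnu : nu.IsEven) (T : ℕ → ℕ → ℕ) (hT : IsLR lam mu nu (2*n) T)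
    (k i : ℕ) (hcell : InShape lam mu k 1) (hval : T k 1 = 2*i + 1) :
    InShape lam mu (k+1) 1 ∧ T (k+1) 1 = 2*(i+1) := by
  obtain ⟨a, b, hab, hvalab, hafter⟩ :=
    hT.exists_succ_after hcell (by rw [hval]; exact (hnu i).symm)
  have hka : k < a := by
    rcases hafter with hka | ⟨rfl, hb⟩
    · exact hka
    · obtain rfl : b = 1 := le_antisymm hb (Nat.one_le_of_lt hab.2.1)
      omega
  have hb : 1 ≤ b := Nat.one_le_of_lt hab.2.1
  have hk1 : InShape lam mu (k+1) 1 := hcell.of_between hab k.le_succ hka le_rfl hb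
  have ha1 : InShape lam mu a 1 := hcell.of_between hab hka.le le_rfl le_rfl hb
  refine ⟨hk1, le_antisymm ?_ ?_⟩
  · calc T (k+1) 1 ≤ T a 1 := hT.ssyt.le_of_col hk1 ha1 hka
      _ ≤ T a b := hT.ssyt.le_of_row ha1 hab hb
      _ = 2*(i+1) := by omega
  · have := hT.ssyt.colLt k 1 hcell hk1
    omega

/-- In an LR tableau of even weight, if `T(k,1) = 2i+1` then
`T(k+1,1) = 2(i+1)`. -/
theorem stmt3 (n : ℕ) (lam mu nu : YPart) (hl : lam.len ≤ 2*n) (hsub : mu.Sub lam)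
    (hnu : nu.IsEven) (T : ℕ → ℕ → ℕ) (hT : IsLR lam mu nu (2*n) T)
    (k i : ℕ) (hcell : InShape lam mu k 1) (hval : T k 1 = 2*i + 1) :
    InShape lam mu (k+1) 1 ∧ T (k+1) 1 = 2*(i+1) :=
  stmt3_general n lam mu nu hnu T hT k i hcell hval
end

section
/- Let T be an LR tableau of shape λ/μ and even weight ν on [2n] with ℓ(μ) ≤ n. Then T satisfies the Sundaram property if and only if for every t ≥ 1 (with row n+t nonempty in λ/μ), either T(n+t,1) is even and ≥ 2t, or T(n+t,1) is odd and ≥ 2t+1. In particular, it suffices to check the Sundaram condition on the first column of T. -/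
/-
For a natural number, "even and `≥ 2t`, or odd and `≥ 2t + 1`" just says `≥ 2t`.
Below row `n` the skew shape starts in column 1 and rows weakly increase, so `T(n+t, 1)` is the
least entry of row `n + t`; if it is `≥ 2t`, no odd entry `2i + 1` with `i < t` occurs in that
row, which is Sundaram's condition. Conversely, under Sundaram's condition, strictness of the first
column lifts `T(n+t, 1) ≥ 2t` to `T(n+t+1, 1) ≥ 2t + 1`, and the condition excludes the odd value
`2t + 1` from row `n + t + 1`.
-/

lemma YPart.part_eq_zero_of_len_lt (p : YPart) {k : ℕ} (hk : p.len < k) : p.part k = 0 := by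
  by_contra h
  obtain ⟨N, hN⟩ := p.evZero
  have hbdd : BddAbove {k | 1 ≤ k ∧ p.part k ≠ 0} :=
    ⟨N, fun x hx => not_lt.mp fun hxN => hx.2 (hN x hxN.le)⟩
  have : k ≤ p.len := le_csSup hbdd ⟨by omega, h⟩
  omega

lemma even_and_le_or_odd_and_succ_le_iff (x t : ℕ) :
    (Even x ∧ 2 * t ≤ x) ∨ (Odd x ∧ 2 * t + 1 ≤ x) ↔ 2 * t ≤ x := by
  constructor
  · rintro (⟨-, h⟩ | ⟨-, h⟩) <;> omega
  · intro h
    rcases Nat.even_or_odd x with hx | hx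
    · exact .inl ⟨hx, h⟩
    · obtain ⟨r, rfl⟩ := hx
      exact .inr ⟨⟨r, rfl⟩, by omega⟩

section

variable {l m : YPart} {N : ℕ} {T : ℕ → ℕ → ℕ}

lemma InShape.one_of_part_eq_zero {k j : ℕ} (h : InShape l m k j) (hm : m.part k = 0) :
    InShape l m k 1 :=
  ⟨h.1, by omega, by have := h.2.1; have := h.2.2; omega⟩

lemma InShape.of_succ_one {k : ℕ} (h : InShape l m (k + 1) 1) (hk : 1 ≤ k)
    (hm : m.part k = 0) : InShape l m k 1 :=
  ⟨hk, by omega, le_trans h.2.2 (l.antitone k (k + 1) k.le_succ)⟩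

lemma IsSSYT.row_mono (hS : IsSSYT l m N T) {k j j' : ℕ} (hj : InShape l m k j)
    (hj' : InShape l m k j') (hjj' : j ≤ j') : T k j ≤ T k j' := by
  induction j', hjj' using Nat.le_induction with
  | base => exact le_rfl
  | succ j' hjj' ih =>
    have hmid : InShape l m k j' := ⟨hj.1, by have := hj.2.1; omega, by have := hj'.2.2; omega⟩
    exact (ih hmid).trans (hS.rowLe k j' hmid hj')

lemma Sundaram.two_mul_le_of_two_mul_le_succ {n t j : ℕ} (hSund : Sundaram n l m T)
    (hin : InShape l m (n + t) j) (h : 2 * t ≤ T (n + t) j + 1) : 2 * t ≤ T (n + t) j := by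
  by_contra hlt
  have := hSund (n + t) j (t - 1) hin (by omega)
  omega

variable {n : ℕ} (hS : IsSSYT l m N T) (hm : ∀ k, n < k → m.part k = 0)
include hS hm

lemma Sundaram.two_mul_le_first_column (hSund : Sundaram n l m T) :
    ∀ t, InShape l m (n + t) 1 → 2 * t ≤ T (n + t) 1 := by
  intro t
  induction t with
  | zero => intro; omega
  | succ t ih =>
    intro hin
    refine hSund.two_mul_le_of_two_mul_le_succ hin ?_
    rw [← Nat.add_assoc] at hin ⊢
    rcases Nat.eq_zero_or_pos t with rfl | ht
    · have := (hS.pos _ _ hin).1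
      omega
    · have hup : InShape l m (n + t) 1 := hin.of_succ_one (by omega) (hm (n + t) (by omega))
      have := hS.colLt _ _ hup hin
      have := ih hup
      omega

lemma sundaram_of_two_mul_le_first_column
    (h : ∀ t, 1 ≤ t → InShape l m (n + t) 1 → 2 * t ≤ T (n + t) 1) : Sundaram n l m T := by
  intro k j i hin hv
  by_contra! hk
  obtain ⟨t, rfl⟩ : ∃ t, k = n + t := ⟨k - n, by omega⟩
  have hin1 := hin.one_of_part_eq_zero (hm _ (by omega))
  have := hS.row_mono hin1 hin (by have := hin.2.1; omega)
  have := h t (by omega) hin1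
  omega

end

theorem stmt7_general (n : ℕ) (lam mu nu : YPart)
    (hmu : mu.len ≤ n) (T : ℕ → ℕ → ℕ)
    (hT : IsLR lam mu nu (2*n) T) :
    Sundaram n lam mu T ↔
      ∀ t, 1 ≤ t → InShape lam mu (n+t) 1 →
        (Even (T (n+t) 1) ∧ 2*t ≤ T (n+t) 1) ∨
        (Odd (T (n+t) 1) ∧ 2*t + 1 ≤ T (n+t) 1) := by
  have hmu0 : ∀ k, n < k → mu.part k = 0 := fun k hk => mu.part_eq_zero_of_len_lt (by omega)
  simp only [even_and_le_or_odd_and_succ_le_iff]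
  exact ⟨fun hSund t _ => hSund.two_mul_le_first_column hT.ssyt hmu0 t,
    sundaram_of_two_mul_le_first_column hT.ssyt hmu0⟩

/-- An LR tableau of even weight with `ℓ(μ) ≤ n` satisfies the
Sundaram property iff for every `t ≥ 1` with row `n+t` nonempty, the
first-column entry `T(n+t,1)` is even and `≥ 2t`, or odd and `≥ 2t+1`. -/
theorem stmt7 (n : ℕ) (lam mu nu : YPart) (hl : lam.len ≤ 2*n) (hsub : mu.Sub lam)
    (hmu : mu.len ≤ n) (hnu : nu.IsEven) (T : ℕ → ℕ → ℕ)
    (hT : IsLR lam mu nu (2*n) T) :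
    Sundaram n lam mu T ↔
      ∀ t, 1 ≤ t → InShape lam mu (n+t) 1 →
        (Even (T (n+t) 1) ∧ 2*t ≤ T (n+t) 1) ∨
        (Odd (T (n+t) 1) ∧ 2*t + 1 ≤ T (n+t) 1) :=
  stmt7_general n lam mu nu hmu T hT
end

section
/- Let T be an LR tableau of shape λ/μ and even weight ν on [2n] with ℓ(μ) ≤ n. If T(n+s,1) is odd and strictly less than 2s+1 for some s ≥ 1, then there exists t with s < t such that T(n+t,1) is even and strictly less than 2t. -/
/-! In the Yamanouchi word of an even weight, the letters `2i+1` and `2i+2` occur equally often and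
every prefix has at least as many `2i+1` as `2i+2`; so every suffix has at least as many `2i+2`
as `2i+1`. Hence below the entry `2i+1` in cell `(n+s,1)` there is an entry `2i+2`, in a lower row
`k` because rows weakly increase. Column `1` strictly increases, so
`2i+1 + (k - (n+s)) ≤ T(k,1) ≤ 2i+2`, which forces `k = n+s+1` and `T(n+s+1,1) = 2i+2 < 2(s+1)`. -/

lemma InShape.of_le_of_le {l m : YPart} {k j k' j' r c : ℕ} (h : InShape l m k j)
    (h' : InShape l m k' j') (hkr : k ≤ r) (hrk : r ≤ k') (hjc : j ≤ c) (hcj : c ≤ j') :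
    InShape l m r c :=
  ⟨h.1.trans hkr, (m.antitone _ _ hkr).trans_lt (h.2.1.trans_le hjc),
    hcj.trans (h'.2.2.trans (l.antitone _ _ hrk))⟩

lemma inShape_finite (l m : YPart) (Q : ℕ × ℕ → Prop) :
    {c : ℕ × ℕ | InShape l m c.1 c.2 ∧ Q c}.Finite := by
  obtain ⟨N, hN⟩ := l.evZero
  refine ((Set.finite_Iio N).prod (Set.finite_Iic (l.part 0))).subset ?_
  rintro ⟨k, j⟩ ⟨⟨-, hmj, hj⟩, -⟩
  simp only at hmj hj
  refine ⟨Set.mem_Iio.mpr ?_, Set.mem_Iic.mpr (hj.trans (l.antitone 0 k k.zero_le))⟩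
  by_contra hNk
  have := hN k (not_lt.mp hNk)
  omega

lemma cnt_eq_cnt_add_cnt_not (l m : YPart) (T : ℕ → ℕ → ℕ) (P : ℕ → ℕ → Prop) (v : ℕ) :
    cnt l m T (fun _ _ => True) v = cnt l m T P v + cnt l m T (fun a b => ¬ P a b) v := by
  unfold cnt
  rw [← Set.ncard_union_eq ?_ (inShape_finite l m _) (inShape_finite l m _)]
  · congr 1
    ext
    simp only [Set.mem_ofPred_eq, Set.mem_union]
    tauto
  · exact Set.disjoint_left.mpr fun _ h1 h2 => h2.2.2 h1.2.2

namespace IsSSYT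

variable {l m : YPart} {N : ℕ} {T : ℕ → ℕ → ℕ}

lemma row_weak_of_le (hT : IsSSYT l m N T) {k j j' : ℕ} (h : InShape l m k j)
    (h' : InShape l m k j') (hjj : j ≤ j') : T k j ≤ T k j' := by
  induction j', hjj using Nat.le_induction with
  | base => rfl
  | succ c hjc ih =>
    have hc : InShape l m k c := h.of_le_of_le h' le_rfl le_rfl hjc c.le_succ
    exact (ih hc).trans (hT.rowLe k c hc h')

lemma col_add_sub_le (hT : IsSSYT l m N T) {k k' j : ℕ} (h : InShape l m k j)
    (h' : InShape l m k' j) (hkk : k ≤ k') : T k j + (k' - k) ≤ T k' j := by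
  induction k', hkk using Nat.le_induction with
  | base => simp
  | succ r hkr ih =>
    have hr : InShape l m r j := h.of_le_of_le h' hkr r.le_succ le_rfl le_rfl
    have := hT.colLt r j hr h'
    have := ih hr
    omega

end IsSSYT

namespace IsLR

variable {l m nu : YPart} {N : ℕ} {T : ℕ → ℕ → ℕ}

lemma exists_succ_not_mem_prefix (hT : IsLR l m nu N T) (hnu : nu.IsEven) {k j i : ℕ}
    (hkj : InShape l m k j) (hTkj : T k j = 2*i+1) :
    ∃ c : ℕ × ℕ, InShape l m c.1 c.2 ∧ T c.1 c.2 = 2*i+2 ∧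
      ¬ (c.1 < k ∨ (c.1 = k ∧ j+1 ≤ c.2)) := by
  set P : ℕ → ℕ → Prop := fun a b => a < k ∨ (a = k ∧ j+1 ≤ b)
  have hodd := cnt_eq_cnt_add_cnt_not l m T P (2*i+1)
  have heven := cnt_eq_cnt_add_cnt_not l m T P (2*i+2)
  rw [hT.weight _ (by omega)] at hodd heven
  have hprefix : cnt l m T P (2*i+2) ≤ cnt l m T P (2*i+1) := hT.yam k (j+1) (2*i+1) (by omega)
  have hsuffix_odd : 0 < cnt l m T (fun a b => ¬ P a b) (2*i+1) :=
    (Set.ncard_pos (inShape_finite l m _)).mpr ⟨(k, j), hkj, hTkj, by simp [P]⟩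
  have hsuffix_even : 0 < cnt l m T (fun a b => ¬ P a b) (2*i+2) := by
    rw [hnu i] at hodd
    omega
  exact (Set.ncard_pos (inShape_finite l m _)).mp hsuffix_even

lemma exists_succ_below (hT : IsLR l m nu N T) (hnu : nu.IsEven) {k j i : ℕ}
    (hkj : InShape l m k j) (hTkj : T k j = 2*i+1) :
    ∃ k' j', k < k' ∧ InShape l m k' j' ∧ T k' j' = 2*i+2 := by
  obtain ⟨⟨k', j'⟩, hc, hTc, hnot⟩ := hT.exists_succ_not_mem_prefix hnu hkj hTkj
  simp only [not_or, not_and, not_le, not_lt] at hc hTc hnot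
  refine ⟨k', j', lt_of_le_of_ne hnot.1 fun hk => ?_, hc, hTc⟩
  subst hk
  have := hT.ssyt.row_weak_of_le hc hkj (Nat.lt_succ_iff.mp (hnot.2 rfl))
  omega

end IsLR

theorem stmt10_general (n : ℕ) (lam mu nu : YPart)
    (hnu : nu.IsEven) (T : ℕ → ℕ → ℕ)
    (hT : IsLR lam mu nu (2*n) T)
    (s : ℕ) (hrow : InShape lam mu (n+s) 1)
    (hodd : Odd (T (n+s) 1)) (hlt : T (n+s) 1 < 2*s + 1) :
    ∃ t, s < t ∧ InShape lam mu (n+t) 1 ∧ Even (T (n+t) 1) ∧ T (n+t) 1 < 2*t := by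
  obtain ⟨i, hi⟩ := hodd
  obtain ⟨k, j, hk, hkj, hTkj⟩ := hT.exists_succ_below hnu hrow hi
  have hk1 : InShape lam mu k 1 := hrow.of_le_of_le hkj hk.le le_rfl le_rfl
    (by have := hkj.2.1; omega)
  have hcol := hT.ssyt.col_add_sub_le hrow hk1 hk.le
  have hrow' := hT.ssyt.row_weak_of_le hk1 hkj (by have := hkj.2.1; omega)
  obtain rfl : k = n + (s+1) := by omega
  refine ⟨s+1, by omega, hk1, ⟨i+1, by omega⟩, by omega⟩

/-- In an LR tableau of even weight with `ℓ(μ) ≤ n`, if `T(n+s,1)`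
is odd and `< 2s+1` for some `s ≥ 1`, then `T(n+t,1)` is even and `< 2t` for
some `t > s`. -/
theorem stmt10 (n : ℕ) (lam mu nu : YPart) (hl : lam.len ≤ 2*n) (hsub : mu.Sub lam)
    (hmu : mu.len ≤ n) (hnu : nu.IsEven) (T : ℕ → ℕ → ℕ)
    (hT : IsLR lam mu nu (2*n) T)
    (s : ℕ) (hs : 1 ≤ s) (hrow : InShape lam mu (n+s) 1)
    (hodd : Odd (T (n+s) 1)) (hlt : T (n+s) 1 < 2*s + 1) :
    ∃ t, s < t ∧ InShape lam mu (n+t) 1 ∧ Even (T (n+t) 1) ∧ T (n+t) 1 < 2*t :=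
  stmt10_general n lam mu nu hnu T hT s hrow hodd hlt
end

section
/- Let T be an LR tableau of shape λ/μ and even weight ν on [2n] with ℓ(μ) ≤ n, and suppose T fails the Sundaram property. Let n+t+1 (t ≥ 0) be the minimal row of T where a Sundaram violation occurs. Then T(n+t,1) = 2t, T(n+t+1,1) = 2t+1, T(n+t+2,1) = 2(t+1), and T(n+k,1) ≥ 2k for all 1 ≤ k ≤ t−1. -/
section Shape

variable {lam mu : YPart} {k j : ℕ}

lemma setOf_inShape_finite (lam mu : YPart) : {c : ℕ × ℕ | InShape lam mu c.1 c.2}.Finite := by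
  obtain ⟨N, hN⟩ := lam.evZero
  refine ((Set.finite_Iio N).prod (Set.finite_Iic (lam.part 0))).subset ?_
  rintro ⟨a, b⟩ ⟨-, hmu, hlam⟩
  refine ⟨?_, hlam.trans (lam.antitone 0 a (Nat.zero_le a))⟩
  by_contra h
  have := hN a (not_lt.mp h)
  simp only at hmu hlam
  omega

lemma InShape.of_le_of_le_s11 {k' j' a b : ℕ} (h : InShape lam mu k j) (h' : InShape lam mu k' j')
    (hka : k ≤ a) (hak : a ≤ k') (hjb : j ≤ b) (hbj : b ≤ j') : InShape lam mu a b :=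
  ⟨h.1.trans hka, (mu.antitone k a hka).trans_lt (h.2.1.trans_le hjb),
    hbj.trans (h'.2.2.trans (lam.antitone a k' hak))⟩

lemma InShape.of_le_of_len_lt {k' j' : ℕ} (h : InShape lam mu k j) (hk' : mu.len < k')
    (hj' : 1 ≤ j') (hkk : k' ≤ k) (hjj : j' ≤ j) : InShape lam mu k' j' := by
  refine ⟨by omega, ?_, hjj.trans (h.2.2.trans (lam.antitone k' k hkk))⟩
  rw [mu.part_eq_zero_of_len_lt hk']
  exact hj'

end Shape

namespace IsSSYT

variable {lam mu : YPart} {N : ℕ} {T : ℕ → ℕ → ℕ} {k j : ℕ}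

lemma row_mono_s11 (hT : IsSSYT lam mu N T) {j' : ℕ} (h : InShape lam mu k j)
    (h' : InShape lam mu k j') (hj : j ≤ j') : T k j ≤ T k j' := by
  induction j', hj using Nat.le_induction with
  | base => exact le_rfl
  | succ m hm ih =>
    have hm' : InShape lam mu k m := h.of_le_of_le_s11 h' le_rfl le_rfl hm (by omega)
    exact (ih hm').trans (hT.rowLe k m hm' h')

lemma col_mono (hT : IsSSYT lam mu N T) {k' : ℕ} (h : InShape lam mu k j)
    (h' : InShape lam mu k' j) (hk : k ≤ k') : T k j ≤ T k' j := by
  induction k', hk using Nat.le_induction with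
  | base => exact le_rfl
  | succ m hm ih =>
    have hm' : InShape lam mu m j := h.of_le_of_le_s11 h' hm (by omega) le_rfl le_rfl
    exact (ih hm').trans (hT.colLt m j hm' h').le

lemma mono (hT : IsSSYT lam mu N T) {k' j' : ℕ} (h : InShape lam mu k j)
    (h' : InShape lam mu k' j') (hk : k ≤ k') (hj : j ≤ j') : T k j ≤ T k' j' :=
  (hT.row_mono_s11 h (h.of_le_of_le_s11 h' le_rfl hk hj le_rfl) hj).trans
    (hT.col_mono (h.of_le_of_le_s11 h' le_rfl hk hj le_rfl) h' hk)

end IsSSYT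

section Count

variable {lam mu : YPart} {T : ℕ → ℕ → ℕ} {P : ℕ → ℕ → Prop} {i : ℕ}

lemma cnt_eq_cnt_true (hP : ∀ a b, InShape lam mu a b → T a b = i → P a b) :
    cnt lam mu T P i = cnt lam mu T (fun _ _ => True) i := by
  unfold cnt
  congr 1
  ext ⟨a, b⟩
  exact ⟨fun ⟨ha, hi, _⟩ => ⟨ha, hi, trivial⟩,
    fun ⟨ha, hi, _⟩ => ⟨ha, hi, hP a b ha hi⟩⟩

lemma cnt_lt_cnt_true {a b : ℕ} (ha : InShape lam mu a b) (hi : T a b = i) (hP : ¬ P a b) :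
    cnt lam mu T P i < cnt lam mu T (fun _ _ => True) i := by
  refine Set.ncard_lt_ncard ⟨fun c ⟨hc, hci, _⟩ => ⟨hc, hci, trivial⟩, fun hsub => ?_⟩
    ((setOf_inShape_finite lam mu).subset fun c hc => hc.1)
  exact hP (hsub (a := (a, b)) ⟨ha, hi, trivial⟩).2.2

end Count

lemma IsLR.exists_succ_below_s11 {lam mu nu : YPart} {N : ℕ} {T : ℕ → ℕ → ℕ} {k j i : ℕ}
    (hT : IsLR lam mu nu N T) (hnu : nu.IsEven) (hin : InShape lam mu k j)
    (hTk : T k j = 2*i + 1) :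
    ∃ r j', k < r ∧ InShape lam mu r j' ∧ T r j' = 2*i + 2 := by
  by_contra! hnone
  have hall : cnt lam mu T (fun a b => a < k ∨ (a = k ∧ j + 1 ≤ b)) (2*i + 1 + 1)
      = cnt lam mu T (fun _ _ => True) (2*i + 1 + 1) := by
    refine cnt_eq_cnt_true fun a b ha hab => ?_
    rcases lt_trichotomy a k with hak | rfl | hak
    · exact Or.inl hak
    · refine Or.inr ⟨rfl, Nat.succ_le_of_lt (lt_of_not_ge fun hbj => ?_)⟩
      have := hT.ssyt.row_mono_s11 ha hin hbj
      omega
    · exact absurd (by omega) (hnone a b hak ha)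
  have hmiss : cnt lam mu T (fun a b => a < k ∨ (a = k ∧ j + 1 ≤ b)) (2*i + 1)
      < cnt lam mu T (fun _ _ => True) (2*i + 1) :=
    cnt_lt_cnt_true hin hTk (by omega)
  have hyam := hT.yam k (j + 1) (2*i + 1) (by omega)
  have hodd : cnt lam mu T (fun _ _ => True) (2*i + 1) = nu.part (2*i + 1) :=
    hT.weight _ (by omega)
  have heven : cnt lam mu T (fun _ _ => True) (2*i + 1 + 1) = nu.part (2*i + 2) :=
    hT.weight _ (by omega)
  have := hnu i
  omega

section Sundaram

variable {n : ℕ} {lam mu : YPart} {N : ℕ} {T : ℕ → ℕ → ℕ}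

lemma two_mul_le_of_not_sundViolRow {k j : ℕ} (hnv : ¬ SundViolRow n lam mu T (n + k))
    (hk : 1 ≤ k) (hj : InShape lam mu (n + k) j) (h : 2*k - 1 ≤ T (n + k) j) :
    2*k ≤ T (n + k) j :=
  by_contra fun hlt => hnv ⟨j, k - 1, hj, by omega, by omega⟩

lemma two_mul_le_of_forall_not_sundViolRow {s j : ℕ} (hT : IsSSYT lam mu N T)
    (hmu : mu.len ≤ n) (hj : InShape lam mu (n + s) j)
    (hnv : ∀ k < s, ¬ SundViolRow n lam mu T (n + k)) :
    ∀ k, 1 ≤ k → k < s → 2*k ≤ T (n + k) j := by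
  have hrow : ∀ k, 1 ≤ k → k < s → InShape lam mu (n + k) j := fun k hk hks =>
    hj.of_le_of_len_lt (by omega) (by have := hj.2.1; omega) (by omega) le_rfl
  intro k hk
  induction k, hk using Nat.le_induction with
  | base =>
    intro hs
    exact two_mul_le_of_not_sundViolRow (hnv 1 hs) le_rfl (hrow 1 le_rfl hs)
      (hT.pos _ _ (hrow 1 le_rfl hs)).1
  | succ m hm ih =>
    intro hs
    have hm1 := hrow (m + 1) (by omega) hs
    have hlt : T (n + m) j < T (n + (m + 1)) j := hT.colLt (n + m) j (hrow m hm (by omega)) hm1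
    exact two_mul_le_of_not_sundViolRow (hnv (m + 1) hs) (by omega) hm1
      (by have := ih (by omega); omega)

end Sundaram

theorem stmt11_general (n t : ℕ) (lam mu nu : YPart) (hmu : mu.len ≤ n) (hnu : nu.IsEven)
    (T : ℕ → ℕ → ℕ)
    (hT : IsLR lam mu nu (2*n) T)
    (hviol : SundViolRow n lam mu T (n+t+1))
    (hmin : ∀ k, k < n+t+1 → ¬ SundViolRow n lam mu T k) :
    T (n+t) 1 = 2*t ∧ T (n+t+1) 1 = 2*t + 1 ∧ T (n+t+2) 1 = 2*(t+1) ∧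
      ∀ k, 1 ≤ k → k ≤ t - 1 → 2*k ≤ T (n+k) 1 := by
  obtain ⟨jv, iv, hvin, hvT, hvlt⟩ := hviol
  have hjv : 1 ≤ jv := by have := hvin.2.1; omega
  have hin1 : InShape lam mu (n+t+1) 1 := hvin.of_le_of_len_lt (by omega) le_rfl le_rfl hjv
  have hcol := two_mul_le_of_forall_not_sundViolRow (s := t + 1) hT.ssyt hmu hin1
    fun k hk => hmin (n + k) (by omega)
  have hupper : T (n+t+1) 1 ≤ 2*t + 1 := by
    have := hT.ssyt.row_mono_s11 hin1 hvin hjv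
    omega
  have hP12 : T (n+t) 1 = 2*t ∧ T (n+t+1) 1 = 2*t + 1 := by
    obtain rfl | ht := Nat.eq_zero_or_pos t
    · refine ⟨hT.ssyt.outside n 1 fun hn1 => ?_, by have := (hT.ssyt.pos _ _ hin1).1; omega⟩
      -- then `(n,jv)` lies in `λ/μ`, directly above the entry `1` at `(n+1,jv)`
      have hnv : InShape lam mu n jv := hn1.of_le_of_le_s11 hvin le_rfl (by omega) hjv le_rfl
      have : T n jv < T (n+0+1) jv := hT.ssyt.colLt n jv hnv hvin
      have := (hT.ssyt.pos _ _ hnv).1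
      omega
    · have hint : InShape lam mu (n+t) 1 :=
        hin1.of_le_of_len_lt (by omega) le_rfl (by omega) le_rfl
      have := hT.ssyt.colLt (n+t) 1 hint hin1
      have := hcol t ht (by omega)
      omega
  have hP3 : T (n+t+2) 1 = 2*(t+1) := by
    obtain ⟨r, j', hr, hrin, hrT⟩ := hT.exists_succ_below_s11 hnu hin1 hP12.2
    have hj' : 1 ≤ j' := by have := hrin.2.1; omega
    have hin2 : InShape lam mu (n+t+2) 1 := hrin.of_le_of_len_lt (by omega) le_rfl hr hj'
    have := hT.ssyt.mono hin2 hrin hr hj'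
    have : T (n+t+1) 1 < T (n+t+2) 1 := hT.ssyt.colLt (n+t+1) 1 hin1 hin2
    omega
  exact ⟨hP12.1, hP12.2, hP3, fun k hk hkt => hcol k hk (by omega)⟩

/-- If an LR tableau of even weight with `ℓ(μ) ≤ n` fails the
Sundaram property, with minimal violating row `n+t+1`, then `T(n+t,1) = 2t`,
`T(n+t+1,1) = 2t+1`, `T(n+t+2,1) = 2(t+1)`, and `T(n+k,1) ≥ 2k` for
`1 ≤ k ≤ t−1`.  (For `t = 0`, `T(n,1) = 0` by the convention that cells of `μ`
carry the entry `0`.) -/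
theorem stmt11 (n t : ℕ) (lam mu nu : YPart) (hl : lam.len ≤ 2*n)
    (hsub : mu.Sub lam) (hmu : mu.len ≤ n) (hnu : nu.IsEven) (T : ℕ → ℕ → ℕ)
    (hT : IsLR lam mu nu (2*n) T)
    (hviol : SundViolRow n lam mu T (n+t+1))
    (hmin : ∀ k, k < n+t+1 → ¬ SundViolRow n lam mu T k) :
    T (n+t) 1 = 2*t ∧ T (n+t+1) 1 = 2*t + 1 ∧ T (n+t+2) 1 = 2*(t+1) ∧
      ∀ k, 1 ≤ k → k ≤ t - 1 → 2*k ≤ T (n+k) 1 :=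
  stmt11_general n t lam mu nu hmu hnu T hT hviol hmin
end

section
/- Let T be an LR tableau of shape λ/μ and weight ν on [2n], and let G = G_μ(T) be its left companion, defined by the nested sequence μ = μ^{(2n)} ⊇ μ^{(2n−1)} ⊇ ⋯ ⊇ μ^{(1)}, where μ^{(2n−r+1)} is the shape occupied by entries < r (including the 0-entries of μ) in rows r, r+1, …, 2n of T. Then each μ^{(i)}/μ^{(i−1)} is a horizontal strip, so G is a semistandard tableau of shape μ on [2n]. -/
/-
Row `i` of `μ^{(mm)}` is the set of cells of row `2n - mm + i` of `T` carrying an entry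
`< 2n - mm + 1`. Column strictness says that an entry `< c + 1` in row `k + 1` sits below an
entry `< c` in row `k` (or below a cell of `μ`, whose entry is `0`), so these cell sets shrink
when the row index and the bound go up together; they also grow with the bound. Both the
partition inequalities and the interlacing of consecutive shapes follow, and for the bound `1`
only the cells of `μ` remain.
-/

def rowCellsLT (l : YPart) (T : ℕ → ℕ → ℕ) (k c : ℕ) : Set ℕ :=
  {j | 1 ≤ j ∧ j ≤ l.part k ∧ T k j < c}

lemma compShape_eq_ncard_rowCellsLT (l : YPart) (T : ℕ → ℕ → ℕ) (n mm i : ℕ) :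
    compShape l T n mm i = (rowCellsLT l T (2*n - mm + i) (2*n - mm + 1)).ncard :=
  rfl

lemma rowCellsLT_finite (l : YPart) (T : ℕ → ℕ → ℕ) (k c : ℕ) :
    (rowCellsLT l T k c).Finite :=
  (Set.finite_Icc 1 (l.part k)).subset fun _ hj => ⟨hj.1, hj.2.1⟩

lemma rowCellsLT_mono {l : YPart} {T : ℕ → ℕ → ℕ} {k c c' : ℕ} (hc : c ≤ c') :
    rowCellsLT l T k c ⊆ rowCellsLT l T k c' :=
  fun _ ⟨h1, h2, h3⟩ => ⟨h1, h2, h3.trans_le hc⟩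

lemma IsSSYT.rowCellsLT_succ_subset {l m : YPart} {N : ℕ} {T : ℕ → ℕ → ℕ}
    (hT : IsSSYT l m N T) (k : ℕ) {c : ℕ} (hc : 1 ≤ c) :
    rowCellsLT l T (k+1) (c+1) ⊆ rowCellsLT l T k c := by
  rintro j ⟨hj1, hjl, hjT⟩
  refine ⟨hj1, hjl.trans (l.antitone k (k+1) k.le_succ), ?_⟩
  by_cases hin : InShape l m k j
  · have hin' : InShape l m (k+1) j :=
      ⟨k.succ_pos, (m.antitone k (k+1) k.le_succ).trans_lt hin.2.1, hjl⟩
    have := hT.colLt k j hin hin'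
    omega
  · rw [hT.outside k j hin]
    exact hc

lemma IsSSYT.rowCellsLT_one {l m : YPart} {N : ℕ} {T : ℕ → ℕ → ℕ}
    (hT : IsSSYT l m N T) (hsub : m.Sub l) {k : ℕ} (hk : 1 ≤ k) :
    rowCellsLT l T k 1 = Set.Icc 1 (m.part k) := by
  ext j
  constructor
  · rintro ⟨hj1, hjl, hjT⟩
    refine ⟨hj1, not_lt.mp fun hmj => ?_⟩
    have := (hT.pos k j ⟨hk, hmj, hjl⟩).1
    omega
  · rintro ⟨hj1, hjm⟩
    have hT0 := hT.outside k j fun hin => (hin.2.1.trans_le hjm).false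
    exact ⟨hj1, hjm.trans (hsub k), by omega⟩

theorem stmt13_general (n : ℕ) (lam mu nu : YPart)
    (hsub : mu.Sub lam) (T : ℕ → ℕ → ℕ) (hT : IsLR lam mu nu (2*n) T) :
    (∀ i, 1 ≤ i → compShape lam T n (2*n) i = mu.part i) ∧
    (∀ mm i, mm ≤ 2*n → 1 ≤ i →
      compShape lam T n mm (i+1) ≤ compShape lam T n mm i) ∧
    (∀ mm, 1 ≤ mm → mm ≤ 2*n →
      (∀ i, 1 ≤ i → compShape lam T n (mm-1) i ≤ compShape lam T n mm i) ∧
      (∀ i, 1 ≤ i → compShape lam T n mm (i+1) ≤ compShape lam T n (mm-1) i)) := by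
  have hS := hT.ssyt
  have shift (k c : ℕ) (hc : 1 ≤ c) :
      (rowCellsLT lam T (k+1) (c+1)).ncard ≤ (rowCellsLT lam T k c).ncard :=
    Set.ncard_le_ncard (hS.rowCellsLT_succ_subset k hc) (rowCellsLT_finite ..)
  have raise (k c : ℕ) :
      (rowCellsLT lam T k c).ncard ≤ (rowCellsLT lam T k (c+1)).ncard :=
    Set.ncard_le_ncard (rowCellsLT_mono c.le_succ) (rowCellsLT_finite ..)
  simp only [compShape_eq_ncard_rowCellsLT]
  refine ⟨fun i hi => ?_, fun mm i _ _ => ?_, fun mm hmm1 hmm => ⟨fun i _ => ?_, fun i _ => ?_⟩⟩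
  · rw [Nat.sub_self, zero_add, zero_add, hS.rowCellsLT_one hsub hi, ← Finset.coe_Icc,
      Set.ncard_coe_finset, Nat.card_Icc, Nat.add_sub_cancel]
  · rw [← add_assoc]
    exact (raise _ _).trans (shift _ _ (by omega))
  · have hrow : 2*n - (mm-1) + i = 2*n - mm + i + 1 := by omega
    have hbd : 2*n - (mm-1) + 1 = 2*n - mm + 1 + 1 := by omega
    rw [hrow, hbd]
    exact shift _ _ (by omega)
  · have hrow : 2*n - (mm-1) + i = 2*n - mm + (i+1) := by omega
    have hbd : 2*n - (mm-1) + 1 = 2*n - mm + 1 + 1 := by omega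
    rw [hrow, hbd]
    exact raise _ _

/-- The left-companion chain of an LR tableau `T` is a chain of
partitions with top `μ` and all consecutive differences horizontal strips, so it
defines a semistandard tableau of shape `μ` on `[2n]`. -/
theorem stmt13 (n : ℕ) (lam mu nu : YPart) (hl : lam.len ≤ 2*n)
    (hsub : mu.Sub lam) (T : ℕ → ℕ → ℕ) (hT : IsLR lam mu nu (2*n) T) :
    (∀ i, 1 ≤ i → compShape lam T n (2*n) i = mu.part i) ∧
    (∀ mm i, mm ≤ 2*n → 1 ≤ i →
      compShape lam T n mm (i+1) ≤ compShape lam T n mm i) ∧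
    (∀ mm, 1 ≤ mm → mm ≤ 2*n →
      (∀ i, 1 ≤ i → compShape lam T n (mm-1) i ≤ compShape lam T n mm i) ∧
      (∀ i, 1 ≤ i → compShape lam T n mm (i+1) ≤ compShape lam T n (mm-1) i)) :=
  stmt13_general n lam mu nu hsub T hT
end

section
/- Let T be an LR tableau of shape λ/μ and weight ν on [2n] with left companion chain μ = μ^{(2n)} ⊇ ⋯ ⊇ μ^{(1)}. Then T(k,1) = k for all ℓ(μ) < k ≤ ℓ(λ) (vacuously if ℓ(λ) = ℓ(μ)) if and only if ℓ(μ^{(2n)}) > ℓ(μ^{(2n−1)}) > ⋯ > ℓ(μ^{(2n−ℓ(μ)+1)}) > ℓ(μ^{(2n−ℓ(μ))}) = ⋯ = ℓ(μ^{(1)}) = 0; in this case the first column of G_μ(T) has entries 2n, 2n−1, …, 2n−ℓ(μ)+1 from bottom to top... i.e., G_μ(T)(k,1) = 2n−ℓ(μ)+k for 1 ≤ k ≤ ℓ(μ). -/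
/-!
Both the left-companion chain and the first column of `T` are governed by first entries of rows:
since rows of `T` increase weakly (the cells of `μ` carrying `0`), row `i` of `μ^{(mm)}` is
nonempty exactly when row `k = 2n - mm + i` of `T` is nonempty and `T(k,1) < 2n - mm + 1`.
Rows of `μ` always pass this test. If `T(k,1) = k` below `μ`, no other row passes it, so
`ℓ(μ^{(mm)}) = mm + ℓ(μ) - 2n`, which is the claimed chain of lengths, and the cell `(k,1)` of
`μ` enters the chain exactly at `mm = 2n - ℓ(μ) + k`. Conversely, `ℓ(μ^{(2n+1-k)}) = 0` gives
`T(k,1) ≥ k`, while the Yamanouchi condition forces every entry of row `k` to be at most `k`.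
-/

theorem bddAbove_setOf_ne_zero {f : ℕ → ℕ} (hf : ∃ N, ∀ i, N ≤ i → f i = 0) :
    BddAbove {i | 1 ≤ i ∧ f i ≠ 0} := by
  obtain ⟨N, hN⟩ := hf
  exact ⟨N, fun i hi => by by_contra! hlt; exact hi.2 (hN i hlt.le)⟩

theorem le_shapeLen {f : ℕ → ℕ} (hf : ∃ N, ∀ i, N ≤ i → f i = 0) {i : ℕ} (hi : 1 ≤ i)
    (h : f i ≠ 0) : i ≤ shapeLen f :=
  le_csSup (bddAbove_setOf_ne_zero hf) ⟨hi, h⟩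

theorem shapeLen_eq_of_ne_zero_iff {f : ℕ → ℕ} {M : ℕ}
    (h : ∀ i, 1 ≤ i → (f i ≠ 0 ↔ i ≤ M)) : shapeLen f = M := by
  have hbdd : ∀ x ∈ {i | 1 ≤ i ∧ f i ≠ 0}, x ≤ M := fun x hx => (h x hx.1).mp hx.2
  refine le_antisymm (csSup_le' hbdd) ?_
  rcases Nat.eq_zero_or_pos M with hM | hM
  · exact hM ▸ Nat.zero_le _
  · exact le_csSup ⟨M, hbdd⟩ ⟨hM, (h M hM).mpr le_rfl⟩

namespace YPart

theorem part_ne_zero_iff_le_len (p : YPart) {k : ℕ} (hk : 1 ≤ k) :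
    p.part k ≠ 0 ↔ k ≤ p.len := by
  refine ⟨le_shapeLen p.evZero hk, fun hkl hzero => ?_⟩
  have hne : {i | 1 ≤ i ∧ p.part i ≠ 0}.Nonempty := by
    by_contra hempty
    rw [Set.not_nonempty_iff_eq_empty] at hempty
    rw [len, hempty, csSup_empty, Nat.bot_eq_zero] at hkl
    omega
  have hlen : p.part p.len ≠ 0 := (Nat.sSup_mem hne (bddAbove_setOf_ne_zero p.evZero)).2
  have := p.antitone k p.len hkl
  omega

theorem part_eq_zero_of_len_lt_s16 (p : YPart) {k : ℕ} (hk : p.len < k) : p.part k = 0 := by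
  by_contra h
  have := (p.part_ne_zero_iff_le_len (by omega)).mp h
  omega

theorem Sub.len_le {m l : YPart} (h : m.Sub l) : m.len ≤ l.len := by
  rcases Nat.eq_zero_or_pos m.len with hm | hm
  · omega
  · have := h m.len
    have := (m.part_ne_zero_iff_le_len hm).mpr le_rfl
    exact (l.part_ne_zero_iff_le_len hm).mp (by omega)

end YPart

section Tableau

variable {l m : YPart} {N : ℕ} {T : ℕ → ℕ → ℕ}

theorem IsSSYT.row_le (hT : IsSSYT l m N T) {k b c : ℕ} (hb : InShape l m k b) (hbc : b ≤ c)
    (hc : c ≤ l.part k) : T k b ≤ T k c := by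
  induction c, hbc using Nat.le_induction with
  | base => exact le_rfl
  | succ c hbc ih =>
    obtain ⟨hk, hmb, -⟩ := hb
    exact (ih (by omega)).trans (hT.rowLe k c ⟨hk, by omega, by omega⟩ ⟨hk, by omega, hc⟩)

theorem IsSSYT.first_le (hT : IsSSYT l m N T) {k j : ℕ} (hj : 1 ≤ j) (hjl : j ≤ l.part k) :
    T k 1 ≤ T k j := by
  by_cases h1 : InShape l m k 1
  · exact hT.row_le h1 hj hjl
  · rw [hT.outside k 1 h1]
    exact Nat.zero_le _

theorem cnt_pos {P : ℕ → ℕ → Prop} {i : ℕ}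
    (h : ∃ c : ℕ × ℕ, InShape l m c.1 c.2 ∧ T c.1 c.2 = i ∧ P c.1 c.2) :
    0 < cnt l m T P i := by
  obtain ⟨K, hK⟩ := l.evZero
  refine (Set.ncard_pos ((Set.finite_Iio K).prod (Set.finite_Iic (l.part 0)) |>.subset ?_)).mpr h
  rintro ⟨a, b⟩ ⟨⟨-, hmb, hbl⟩, -, -⟩
  refine ⟨Set.mem_Iio.mpr ?_, hbl.trans (l.antitone 0 a (Nat.zero_le a))⟩
  by_contra! hKa
  have := hK a hKa
  dsimp only at hmb hbl
  omega

theorem cnt_eq_zero {P : ℕ → ℕ → Prop} {i : ℕ}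
    (h : ∀ c : ℕ × ℕ, InShape l m c.1 c.2 → T c.1 c.2 = i → ¬ P c.1 c.2) :
    cnt l m T P i = 0 :=
  (congrArg Set.ncard <| Set.eq_empty_of_forall_notMem fun c hc =>
    h c hc.1 hc.2.1 hc.2.2).trans (Set.ncard_empty _)

theorem IsLR.le_row {nu : YPart} (hT : IsLR l m nu N T) :
    ∀ a b, InShape l m a b → T a b ≤ a := by
  intro a
  induction a using Nat.strong_induction_on with
  | _ a ih =>
  intro b hb
  have ha := hb.1
  by_contra! hgt
  -- The prefix of the reverse row word ending at `(a, b)` contains `T a b` but not `T a b - 1`.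
  have hword := hT.yam a b (T a b - 1) (by omega)
  rw [Nat.sub_add_cancel (by omega)] at hword
  have htop : 0 < cnt l m T (fun x y => x < a ∨ (x = a ∧ b ≤ y)) (T a b) :=
    cnt_pos ⟨(a, b), hb, rfl, Or.inr ⟨rfl, le_rfl⟩⟩
  have hbelow : cnt l m T (fun x y => x < a ∨ (x = a ∧ b ≤ y)) (T a b - 1) = 0 := by
    refine cnt_eq_zero fun ⟨x, y⟩ hxy hval hpre => ?_
    dsimp only at hxy hval hpre
    rcases hpre with hx | ⟨rfl, hy⟩
    · have := ih x hx y hxy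
      omega
    · have := hT.ssyt.row_le hb hy hxy.2.2
      omega
  omega

end Tableau

section Companion

variable {lam mu : YPart} {N n : ℕ} {T : ℕ → ℕ → ℕ}

def FirstColumnEqRow (lam mu : YPart) (T : ℕ → ℕ → ℕ) : Prop :=
  ∀ k, mu.len < k → k ≤ lam.len → T k 1 = k

theorem compShape_eventually_zero (lam : YPart) (T : ℕ → ℕ → ℕ) (n mm : ℕ) :
    ∃ K, ∀ i, K ≤ i → compShape lam T n mm i = 0 := by
  obtain ⟨K, hK⟩ := lam.evZero
  refine ⟨K, fun i hi => ?_⟩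
  refine (congrArg Set.ncard <| Set.eq_empty_of_forall_notMem fun j hj => ?_).trans
    (Set.ncard_empty _)
  obtain ⟨hj, hjl, -⟩ := hj
  rw [hK (2 * n - mm + i) (by omega)] at hjl
  omega

theorem compShape_ne_zero_iff (hT : IsSSYT lam mu N T) {mm i : ℕ} :
    compShape lam T n mm i ≠ 0 ↔
      1 ≤ lam.part (2 * n - mm + i) ∧ T (2 * n - mm + i) 1 < 2 * n - mm + 1 := by
  rw [compShape, ← pos_iff_ne_zero,
    Set.ncard_pos ((Set.finite_Icc 1 _).subset fun j hj => ⟨hj.1, hj.2.1⟩)]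
  constructor
  · rintro ⟨j, hj, hjl, hjT⟩
    exact ⟨hj.trans hjl, (hT.first_le hj hjl).trans_lt hjT⟩
  · rintro ⟨hl, hT1⟩
    exact ⟨1, le_rfl, hl, hT1⟩

theorem compShape_ne_zero_iff_of_firstColumnEqRow (hsub : mu.Sub lam) (hT : IsSSYT lam mu N T)
    (hcol : FirstColumnEqRow lam mu T) {mm i : ℕ} (hi : 1 ≤ i) :
    compShape lam T n mm i ≠ 0 ↔ 2 * n - mm + i ≤ mu.len := by
  rw [compShape_ne_zero_iff hT]
  set k := 2 * n - mm + i
  have hk : 1 ≤ k := by omega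
  constructor
  · rintro ⟨hl, hT1⟩
    by_contra! hμk
    have := hcol k hμk ((lam.part_ne_zero_iff_le_len hk).mp (by omega))
    omega
  · intro hkμ
    have hμ := (mu.part_ne_zero_iff_le_len hk).mpr hkμ
    have hout : T k 1 = 0 := hT.outside k 1 fun h => by have := h.2.1; omega
    have := hsub k
    omega

theorem shapeLen_compShape (hsub : mu.Sub lam) (hT : IsSSYT lam mu N T)
    (hcol : FirstColumnEqRow lam mu T) {mm : ℕ} (hmm : mm ≤ 2 * n) :
    shapeLen (compShape lam T n mm) = mm + mu.len - 2 * n :=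
  shapeLen_eq_of_ne_zero_iff fun i hi => by
    rw [compShape_ne_zero_iff_of_firstColumnEqRow hsub hT hcol hi]
    omega

theorem leftCompanion_firstColumn (hsub : mu.Sub lam) (hT : IsSSYT lam mu N T)
    (hcol : FirstColumnEqRow lam mu T) (hμ : mu.len ≤ 2 * n) {k : ℕ} (hk : 1 ≤ k)
    (hkμ : k ≤ mu.len) : leftCompanion lam T n k 1 = 2 * n - mu.len + k := by
  have hentered : {mm | 1 ≤ compShape lam T n mm k} = Set.Ici (2 * n - mu.len + k) := by
    ext mm
    rw [Set.mem_ofPred_eq, Set.mem_Ici, Nat.one_le_iff_ne_zero,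
      compShape_ne_zero_iff_of_firstColumnEqRow hsub hT hcol hk]
    omega
  rw [leftCompanion, hentered, csInf_Ici]

theorem firstColumnEqRow_of_shapeLen_eq_zero {nu : YPart} (hl : lam.len ≤ 2 * n)
    (hT : IsLR lam mu nu N T)
    (h : ∀ mm, 1 ≤ mm → mm ≤ 2 * n - mu.len → shapeLen (compShape lam T n mm) = 0) :
    FirstColumnEqRow lam mu T := by
  intro k hμk hkl
  have hk : 1 ≤ k := by omega
  have hlk := (lam.part_ne_zero_iff_le_len hk).mpr hkl
  -- Row `1` of `μ^{(2n+1-k)}` is read off row `k` of `T`.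
  have hempty : compShape lam T n (2 * n + 1 - k) 1 = 0 := by
    by_contra hne
    have := le_shapeLen (compShape_eventually_zero lam T n _) le_rfl hne
    have := h (2 * n + 1 - k) (by omega) (by omega)
    omega
  rw [← not_ne_iff, compShape_ne_zero_iff hT.ssyt, show 2 * n - (2 * n + 1 - k) + 1 = k by omega]
    at hempty
  have := hT.le_row k 1 ⟨hk, by rw [mu.part_eq_zero_of_len_lt_s16 hμk]; omega, by omega⟩
  omega

end Companion

/-- `T(k,1) = k` for all `ℓ(μ) < k ≤ ℓ(λ)` iff the lengths of the
left-companion chain strictly decrease down to `μ^{(2n−ℓ(μ))}` and vanish from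
there on; in that case the first column of `G_μ(T)` is `2n−ℓ(μ)+k` in row `k`. -/
theorem stmt16 (n : ℕ) (lam mu nu : YPart) (hl : lam.len ≤ 2*n)
    (hsub : mu.Sub lam) (T : ℕ → ℕ → ℕ) (hT : IsLR lam mu nu (2*n) T) :
    ((∀ k, mu.len < k → k ≤ lam.len → T k 1 = k) ↔
      ((∀ mm, 2*n - mu.len + 1 ≤ mm → mm ≤ 2*n →
          shapeLen (compShape lam T n (mm-1)) < shapeLen (compShape lam T n mm)) ∧
       (∀ mm, 1 ≤ mm → mm ≤ 2*n - mu.len →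
          shapeLen (compShape lam T n mm) = 0))) ∧
    ((∀ k, mu.len < k → k ≤ lam.len → T k 1 = k) →
      ∀ k, 1 ≤ k → k ≤ mu.len → leftCompanion lam T n k 1 = 2*n - mu.len + k) := by
  refine ⟨⟨fun hcol => ?_, fun h => firstColumnEqRow_of_shapeLen_eq_zero hl hT h.2⟩,
    fun hcol k hk hkμ =>
      leftCompanion_firstColumn hsub hT.ssyt hcol (hsub.len_le.trans hl) hk hkμ⟩
  have hlen := fun mm (hmm : mm ≤ 2 * n) => shapeLen_compShape hsub hT.ssyt hcol hmm
  refine ⟨fun mm hlo hhi => ?_, fun mm hlo hhi => ?_⟩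
  · rw [hlen mm hhi, hlen (mm - 1) (by omega)]
    omega
  · rw [hlen mm (by omega)]
    omega
end
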